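/- If a word w over [n] with A(w) = [n] 12-represents a labeled graph G, then G contains no induced subgraph on four vertices a < b < c < d whose only edges are ad and bc (the pattern Q_4). -/

import Mathlib

/-- The subword of `w` consisting of the occurrences of `x` and `y`. -/
def subw {n : ℕ} (w : List (Fin n)) (x y : Fin n) : List (Fin n) :=
  w.filter fun a => decide (a = x ∨ a = y)

/-- A word has a 12-match if some letter is immediately followed by a strictly larger one. -/
def Has12 {n : ℕ} (s : List (Fin n)) : Prop :=
  ∃ a b : Fin n, a < b ∧ [a, b] <:+: s

/-- `w` 12-represents the labeled graph `G` on `Fin n`. -/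
def Rep12 {n : ℕ} (w : List (Fin n)) (G : SimpleGraph (Fin n)) : Prop :=
  (∀ i : Fin n, i ∈ w) ∧
  ∀ x y : Fin n, x ≠ y → (G.Adj x y ↔ ¬ Has12 (subw w x y))

/-- A graph is 12-representable if some labeling of its vertices admits a 12-representant. -/
def Rep12able {V : Type} [Fintype V] (G : SimpleGraph V) : Prop :=
  ∃ (f : V ≃ Fin (Fintype.card V)) (w : List (Fin (Fintype.card V))),
    Rep12 w (G.map f.toEmbedding)

/-!
For `x < y`, the pair `xy` is a non-edge exactly when some `x` occurs before some `y` in `w`: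
in the two-letter subword such an `x … y` always contains an adjacent factor `xy`.
In a copy of `Q₄`, the non-edges `ac` and `bd` give an `a` before a `c` and a `b` before a `d`,
while the edge `ad` forces every `d` to precede every `a`. Hence that `b` precedes that `c`,
contradicting the edge `bc`.
-/

open List

section Words

variable {α : Type*}

theorem pair_sublist_iff {x y : α} {l : List α} :
    [x, y] <+ l ↔ ∃ l₁ l₂, l = l₁ ++ l₂ ∧ x ∈ l₁ ∧ y ∈ l₂ := by
  rw [List.cons_sublist_iff]
  simp only [List.singleton_sublist]

theorem pair_sublist_of_not_pair_sublist {a b c d : α} {w : List α}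
    (hac : [a, c] <+ w) (hbd : [b, d] <+ w) (had : ¬ [a, d] <+ w) : [b, c] <+ w := by
  obtain ⟨p, q, rfl, ha, hc⟩ := pair_sublist_iff.mp hac
  obtain ⟨p', q', hw, hb, hd⟩ := pair_sublist_iff.mp hbd
  rcases List.append_eq_append_iff.mp hw with ⟨m, rfl, rfl⟩ | ⟨m, rfl, rfl⟩
  · exact absurd (pair_sublist_iff.mpr ⟨p, m ++ q', rfl, ha, List.mem_append_right m hd⟩) had
  · exact pair_sublist_iff.mpr ⟨p', m ++ q, by simp, hb, List.mem_append_right m hc⟩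

theorem pair_infix_cons_of_mem {x y : α} {t : List α} (ht : ∀ z ∈ t, z = x ∨ z = y)
    (hy : y ∈ t) : [x, y] <:+: x :: t := by
  induction t with
  | nil => simp at hy
  | cons z t ih =>
    by_cases hzy : z = y
    · exact hzy ▸ (List.prefix_append [x, z] t).isInfix
    · have hzx : z = x := (ht z List.mem_cons_self).resolve_right hzy
      have hy' : y ∈ t := (List.mem_cons.mp hy).resolve_left (Ne.symm hzy)
      subst hzx
      exact List.infix_cons (ih (fun u hu => ht u (List.mem_cons_of_mem z hu)) hy')

theorem pair_infix_of_pair_sublist {x y : α} {s : List α} (hs : ∀ z ∈ s, z = x ∨ z = y)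
    (h : [x, y] <+ s) : [x, y] <:+: s := by
  obtain ⟨l₁, t, rfl, hx, hy⟩ := pair_sublist_iff.mp h
  obtain ⟨p, q, rfl⟩ := List.append_of_mem hx
  have hq : ∀ z ∈ q ++ t, z = x ∨ z = y := fun z hz => hs z (by simp_all)
  have := pair_infix_cons_of_mem hq (List.mem_append_right q hy)
  simpa using this.trans (List.infix_append p (x :: (q ++ t)) [])

end Words

theorem mem_subw {n : ℕ} {w : List (Fin n)} {x y z : Fin n} (h : z ∈ subw w x y) :
    z = x ∨ z = y := by
  simpa using (List.mem_filter.mp h).2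

theorem has12_subw_iff {n : ℕ} {w : List (Fin n)} {x y : Fin n} (hxy : x < y) :
    Has12 (subw w x y) ↔ [x, y] <+ w := by
  constructor
  · rintro ⟨p, q, hpq, hinf⟩
    have hp := mem_subw (hinf.subset (by simp : p ∈ [p, q]))
    have hq := mem_subw (hinf.subset (by simp : q ∈ [p, q]))
    obtain ⟨rfl, rfl⟩ : p = x ∧ q = y := by
      rcases hp with rfl | rfl <;> rcases hq with rfl | rfl <;> simp_all [lt_asymm hxy]
    exact hinf.sublist.trans List.filter_sublist
  · intro h
    have hsub : [x, y] <+ subw w x y := by simpa [subw] using h.filter (fun a => decide (a = x ∨ a = y))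
    exact ⟨x, y, hxy, pair_infix_of_pair_sublist (fun z hz => mem_subw hz) hsub⟩

theorem not_adj_iff_pair_sublist {n : ℕ} {w : List (Fin n)} {G : SimpleGraph (Fin n)}
    (hw : Rep12 w G) {x y : Fin n} (hxy : x < y) : ¬ G.Adj x y ↔ [x, y] <+ w := by
  rw [hw.2 x y hxy.ne, not_not, has12_subw_iff hxy]

theorem no_Q4_of_rep12_general {n : ℕ} (w : List (Fin n)) (G : SimpleGraph (Fin n))
    (hw : Rep12 w G) (a b c d : Fin n) (hab : a < b) (hbc : b < c) (hcd : c < d)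
    (ead : G.Adj a d) (ebc : G.Adj b c)
    (nac : ¬ G.Adj a c) (nbd : ¬ G.Adj b d) :
    False := by
  have hac := (not_adj_iff_pair_sublist hw (hab.trans hbc)).mp nac
  have hbd := (not_adj_iff_pair_sublist hw (hbc.trans hcd)).mp nbd
  have had : ¬ [a, d] <+ w := fun h =>
    (not_adj_iff_pair_sublist hw (hab.trans (hbc.trans hcd))).mpr h ead
  exact (not_adj_iff_pair_sublist hw hbc).mpr (pair_sublist_of_not_pair_sublist hac hbd had) ebc

/-- A 12-representable labeled graph contains no induced copy of $Q_4$: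
four vertices $a<b<c<d$ whose only edges are $ad$ and $bc$. -/
theorem no_Q4_of_rep12 {n : ℕ} (w : List (Fin n)) (G : SimpleGraph (Fin n))
    (hw : Rep12 w G) (a b c d : Fin n) (hab : a < b) (hbc : b < c) (hcd : c < d)
    (ead : G.Adj a d) (ebc : G.Adj b c)
    (nab : ¬ G.Adj a b) (nac : ¬ G.Adj a c) (nbd : ¬ G.Adj b d) (ncd : ¬ G.Adj c d) :
    False :=
  no_Q4_of_rep12_general w G hw a b c d hab hbc hcd ead ebc nac nbd
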